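/- arXiv:2010.15527 — 2 statements merged into one kernel-verified Lean document; each statement's English description precedes it below -/
import Mathlib

section
/- Let L be a pairwise loss function that is Lipschitz continuous with constant |L|₁ and such that t ↦ L(x,y,x',y',t) is convex for every (x,y,x',y'). Let Φ : X×X → H be measurable with ‖k‖_∞ := sup_{(x,x')} ‖Φ(x,x')‖_H < ∞, and let P be a Borel probability measure on X×Y. Then for every λ > 0 there exists a minimizer f_{L*,P,λ} ∈ H of the regularized shifted risk R^reg_{L*,P,λ} over H. -/
/-!
`R^reg_{L*,P,λ}` is `2λ`-strongly convex: convexity of `t ↦ L(x,y,x',y',t)` survives the linear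
map `f ↦ f̂` and integration, and `λ‖f‖²` adds the strong convexity. Since `|f̂| ≤ ‖f‖ ‖k‖_∞`,
the map `f ↦ R_{L*,P}(f̂)` is `|L|₁‖k‖_∞`-Lipschitz and vanishes at `0`, so `R^reg_{L*,P,λ}` is
continuous and bounded below by `-(|L|₁‖k‖_∞)² / (4λ)`. For such a function on a complete space
the midpoint inequality makes every minimizing sequence Cauchy, and its limit is a minimizer.
-/

open MeasureTheory

noncomputable def fhat {X H : Type*} [NormedAddCommGroup H] [InnerProductSpace ℝ H]
    (Φ : X × X → H) (f : H) : X × X → ℝ :=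
  fun p => @inner ℝ H _ f (Φ p)

noncomputable def shiftedRisk {X Y : Type*} [MeasurableSpace X] [MeasurableSpace Y]
    (L : X → Y → X → Y → ℝ → ℝ) (P : Measure (X × Y)) (f : X × X → ℝ) : ℝ :=
  ∫ z : (X × Y) × (X × Y),
    (L z.1.1 z.1.2 z.2.1 z.2.2 (f (z.1.1, z.2.1)) - L z.1.1 z.1.2 z.2.1 z.2.2 0) ∂(P.prod P)

noncomputable def regRisk {X Y H : Type*} [MeasurableSpace X] [MeasurableSpace Y]
    [NormedAddCommGroup H] [InnerProductSpace ℝ H]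
    (L : X → Y → X → Y → ℝ → ℝ) (Φ : X × X → H) (P : Measure (X × Y))
    (lam : ℝ) (f : H) : ℝ :=
  shiftedRisk L P (fhat Φ f) + lam * ‖f‖ ^ 2

open Set Filter Topology

section StrongConvexMinimizer

variable {E : Type*} [NormedAddCommGroup E] [NormedSpace ℝ E] {f : E → ℝ} {m b : ℝ}

theorem StrongConvexOn.sq_norm_sub_le (hf : StrongConvexOn univ m f) (hb : ∀ z, b ≤ f z)
    (x y : E) : m / 8 * ‖x - y‖ ^ 2 ≤ (f x - b + (f y - b)) / 2 := by
  have hmid := hf.2 (mem_univ x) (mem_univ y) (by norm_num : (0 : ℝ) ≤ 1 / 2)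
    (by norm_num : (0 : ℝ) ≤ 1 / 2) (by norm_num)
  have hb_mid := hb ((1 / 2 : ℝ) • x + (1 / 2 : ℝ) • y)
  simp only [smul_eq_mul] at hmid
  linarith

theorem StrongConvexOn.exists_forall_le [CompleteSpace E] (hf : StrongConvexOn univ m f)
    (hm : 0 < m) (hbdd : BddBelow (range f)) (hlsc : LowerSemicontinuous f) :
    ∃ x, ∀ y, f x ≤ f y := by
  set s := ⨅ y, f y
  have hs : ∀ z, s ≤ f z := ciInf_le hbdd
  have hseq (n : ℕ) : ∃ x, f x < s + 1 / (n + 1) :=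
    exists_lt_of_ciInf_lt (lt_add_of_pos_right _ Nat.one_div_pos_of_nat)
  choose u hu using hseq
  have hu_le {N n : ℕ} (hn : N ≤ n) : f (u n) ≤ s + 1 / (N + 1) := by
    have : (1 : ℝ) / (n + 1) ≤ 1 / (N + 1) := Nat.one_div_le_one_div hn
    linarith [hu n]
  have hcauchy : CauchySeq u := by
    refine Metric.cauchySeq_iff.2 fun ε hε => ?_
    obtain ⟨N, hN⟩ := exists_nat_one_div_lt (by positivity : 0 < m / 8 * ε ^ 2)
    refine ⟨N, fun i hi j hj => ?_⟩
    have hsq := hf.sq_norm_sub_le hs (u i) (u j)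
    have hdist : dist (u i) (u j) ^ 2 < ε ^ 2 := by
      rw [dist_eq_norm]
      nlinarith [hu_le hi, hu_le hj]
    simpa [abs_of_nonneg dist_nonneg] using abs_lt_of_sq_lt_sq hdist hε.le
  obtain ⟨x, hx⟩ := cauchySeq_tendsto_of_complete hcauchy
  have hx_le (N : ℕ) : f x ≤ s + 1 / (N + 1) :=
    (hlsc.isClosed_preimage _).mem_of_tendsto hx (eventually_atTop.2 ⟨N, fun _ => hu_le⟩)
  have hlim : Tendsto (fun N : ℕ => s + 1 / ((N : ℝ) + 1)) atTop (𝓝 s) := by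
    simpa using tendsto_one_div_add_atTop_nhds_zero_nat.const_add s
  exact ⟨x, fun y => (ge_of_tendsto' hlim hx_le).trans (hs y)⟩

end StrongConvexMinimizer

section ShiftedRisk

variable {X Y : Type*} {L : X → Y → X → Y → ℝ → ℝ} {c : ℝ} {f g : X × X → ℝ}

def shiftedLoss (L : X → Y → X → Y → ℝ → ℝ) (f : X × X → ℝ) (z : (X × Y) × (X × Y)) :
    ℝ :=
  L z.1.1 z.1.2 z.2.1 z.2.2 (f (z.1.1, z.2.1)) - L z.1.1 z.1.2 z.2.1 z.2.2 0

theorem shiftedLoss_zero (z : (X × Y) × (X × Y)) : shiftedLoss L 0 z = 0 := by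
  simp [shiftedLoss]

theorem abs_shiftedLoss_sub_le
    (hL_lip : ∀ x y x' y' s t, |L x y x' y' t - L x y x' y' s| ≤ c * |t - s|)
    (f g : X × X → ℝ) (z : (X × Y) × (X × Y)) :
    |shiftedLoss L f z - shiftedLoss L g z| ≤ c * |f (z.1.1, z.2.1) - g (z.1.1, z.2.1)| := by
  simpa [shiftedLoss] using hL_lip z.1.1 z.1.2 z.2.1 z.2.2 _ _

theorem abs_shiftedLoss_le
    (hL_lip : ∀ x y x' y' s t, |L x y x' y' t - L x y x' y' s| ≤ c * |t - s|) (hc : 0 ≤ c)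
    {C : ℝ} (hfC : ∀ p, |f p| ≤ C) (z : (X × Y) × (X × Y)) :
    |shiftedLoss L f z| ≤ c * C := by
  have hf0 : |f (z.1.1, z.2.1) - (0 : X × X → ℝ) (z.1.1, z.2.1)| ≤ C := by simpa using hfC _
  simpa [shiftedLoss_zero] using
    (abs_shiftedLoss_sub_le hL_lip f 0 z).trans (mul_le_mul_of_nonneg_left hf0 hc)

theorem shiftedLoss_smul_add_smul_le (hL_convex : ∀ x y x' y', ConvexOn ℝ univ (L x y x' y'))
    {a b : ℝ} (ha : 0 ≤ a) (hb : 0 ≤ b) (hab : a + b = 1) (f g : X × X → ℝ)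
    (z : (X × Y) × (X × Y)) :
    shiftedLoss L (a • f + b • g) z ≤ a * shiftedLoss L f z + b * shiftedLoss L g z := by
  set ℓ := L z.1.1 z.1.2 z.2.1 z.2.2
  have h := (hL_convex z.1.1 z.1.2 z.2.1 z.2.2).2 (mem_univ (f (z.1.1, z.2.1)))
    (mem_univ (g (z.1.1, z.2.1))) ha hb hab
  have hℓ0 : ℓ 0 = a * ℓ 0 + b * ℓ 0 := by rw [← add_mul, hab, one_mul]
  simp only [shiftedLoss, Pi.add_apply, Pi.smul_apply, smul_eq_mul] at h ⊢
  linarith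

variable [MeasurableSpace X] [MeasurableSpace Y] {P : Measure (X × Y)}

theorem shiftedRisk_eq_integral (f : X × X → ℝ) :
    shiftedRisk L P f = ∫ z, shiftedLoss L f z ∂(P.prod P) := rfl

theorem measurable_shiftedLoss
    (hL_meas :
      Measurable fun p : (X × Y) × (X × Y) × ℝ => L p.1.1 p.1.2 p.2.1.1 p.2.1.2 p.2.2)
    (hf : Measurable f) : Measurable (shiftedLoss L f) := by
  have hf' : Measurable fun z : (X × Y) × (X × Y) => f (z.1.1, z.2.1) :=
    hf.comp (measurable_fst.fst.prodMk measurable_snd.fst)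
  exact (hL_meas.comp (measurable_fst.prodMk (measurable_snd.prodMk hf'))).sub
    (hL_meas.comp (measurable_fst.prodMk (measurable_snd.prodMk measurable_const)))

theorem integrable_shiftedLoss [IsFiniteMeasure P]
    (hL_meas :
      Measurable fun p : (X × Y) × (X × Y) × ℝ => L p.1.1 p.1.2 p.2.1.1 p.2.1.2 p.2.2)
    (hL_lip : ∀ x y x' y' s t, |L x y x' y' t - L x y x' y' s| ≤ c * |t - s|) (hc : 0 ≤ c)
    (hf : Measurable f) {C : ℝ} (hfC : ∀ p, |f p| ≤ C) :
    Integrable (shiftedLoss L f) (P.prod P) :=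
  (integrable_const (c * C)).mono' (measurable_shiftedLoss hL_meas hf).aestronglyMeasurable
    (Eventually.of_forall (abs_shiftedLoss_le hL_lip hc hfC))

theorem shiftedRisk_zero : shiftedRisk L P 0 = 0 := by
  simp [shiftedRisk_eq_integral, shiftedLoss_zero]

theorem abs_shiftedRisk_sub_le [IsProbabilityMeasure P]
    (hL_lip : ∀ x y x' y' s t, |L x y x' y' t - L x y x' y' s| ≤ c * |t - s|) (hc : 0 ≤ c)
    (hf : Integrable (shiftedLoss L f) (P.prod P)) (hg : Integrable (shiftedLoss L g) (P.prod P))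
    {δ : ℝ} (hδ : ∀ p, |f p - g p| ≤ δ) :
    |shiftedRisk L P f - shiftedRisk L P g| ≤ c * δ := by
  rw [shiftedRisk_eq_integral, shiftedRisk_eq_integral, ← integral_sub hf hg]
  have hpt (z : (X × Y) × (X × Y)) : ‖shiftedLoss L f z - shiftedLoss L g z‖ ≤ c * δ :=
    (abs_shiftedLoss_sub_le hL_lip f g z).trans (mul_le_mul_of_nonneg_left (hδ _) hc)
  simpa using norm_integral_le_of_norm_le_const (μ := P.prod P) (Eventually.of_forall hpt)

theorem shiftedRisk_smul_add_smul_le (hL_convex : ∀ x y x' y', ConvexOn ℝ univ (L x y x' y'))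
    {a b : ℝ} (ha : 0 ≤ a) (hb : 0 ≤ b) (hab : a + b = 1)
    (hf : Integrable (shiftedLoss L f) (P.prod P)) (hg : Integrable (shiftedLoss L g) (P.prod P))
    (hfg : Integrable (shiftedLoss L (a • f + b • g)) (P.prod P)) :
    shiftedRisk L P (a • f + b • g) ≤ a * shiftedRisk L P f + b * shiftedRisk L P g := by
  simp only [shiftedRisk_eq_integral, ← integral_const_mul]
  rw [← integral_add (hf.const_mul a) (hg.const_mul b)]
  exact integral_mono hfg ((hf.const_mul a).add (hg.const_mul b))
    (shiftedLoss_smul_add_smul_le hL_convex ha hb hab f g)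

end ShiftedRisk

section FeatureMap

variable {X H : Type*} [NormedAddCommGroup H] [InnerProductSpace ℝ H] {Φ : X × X → H}

theorem fhat_zero : fhat Φ 0 = 0 := funext fun _ => inner_zero_left _

theorem fhat_sub (f g : H) : fhat Φ (f - g) = fhat Φ f - fhat Φ g :=
  funext fun _ => inner_sub_left _ _ _

theorem fhat_smul_add_smul (a b : ℝ) (f g : H) :
    fhat Φ (a • f + b • g) = a • fhat Φ f + b • fhat Φ g :=
  funext fun _ => by simp [fhat, inner_add_left, real_inner_smul_left]

theorem abs_fhat_le {kb : ℝ} (hkb : ∀ p, ‖Φ p‖ ≤ kb) (f : H) (p : X × X) :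
    |fhat Φ f p| ≤ ‖f‖ * kb :=
  (abs_real_inner_le_norm _ _).trans (mul_le_mul_of_nonneg_left (hkb p) (norm_nonneg f))

theorem measurable_fhat [MeasurableSpace X] [MeasurableSpace H] [BorelSpace H]
    (hΦ : Measurable Φ) (f : H) : Measurable (fhat Φ f) :=
  (innerSL ℝ f).continuous.measurable.comp hΦ

end FeatureMap

section RegularizedRisk

variable {X Y H : Type*} [MeasurableSpace X] [MeasurableSpace Y] [NormedAddCommGroup H]
  [InnerProductSpace ℝ H] [MeasurableSpace H] [BorelSpace H]
  {L : X → Y → X → Y → ℝ → ℝ} {c : ℝ} {Φ : X × X → H} {kb : ℝ} {P : Measure (X × Y)}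

theorem integrable_shiftedLoss_fhat [IsFiniteMeasure P]
    (hL_meas :
      Measurable fun p : (X × Y) × (X × Y) × ℝ => L p.1.1 p.1.2 p.2.1.1 p.2.1.2 p.2.2)
    (hL_lip : ∀ x y x' y' s t, |L x y x' y' t - L x y x' y' s| ≤ c * |t - s|) (hc : 0 ≤ c)
    (hΦ : Measurable Φ) (hkb : ∀ p, ‖Φ p‖ ≤ kb) (f : H) :
    Integrable (shiftedLoss L (fhat Φ f)) (P.prod P) :=
  integrable_shiftedLoss hL_meas hL_lip hc (measurable_fhat hΦ f) (abs_fhat_le hkb f)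

theorem abs_shiftedRisk_fhat_sub_le [IsProbabilityMeasure P]
    (hL_meas :
      Measurable fun p : (X × Y) × (X × Y) × ℝ => L p.1.1 p.1.2 p.2.1.1 p.2.1.2 p.2.2)
    (hL_lip : ∀ x y x' y' s t, |L x y x' y' t - L x y x' y' s| ≤ c * |t - s|) (hc : 0 ≤ c)
    (hΦ : Measurable Φ) (hkb : ∀ p, ‖Φ p‖ ≤ kb) (f g : H) :
    |shiftedRisk L P (fhat Φ f) - shiftedRisk L P (fhat Φ g)| ≤ c * kb * ‖f - g‖ := by
  have hδ (p : X × X) : |fhat Φ f p - fhat Φ g p| ≤ ‖f - g‖ * kb := by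
    simpa [fhat_sub] using abs_fhat_le hkb (f - g) p
  rw [mul_assoc, mul_comm kb]
  exact abs_shiftedRisk_sub_le hL_lip hc (integrable_shiftedLoss_fhat hL_meas hL_lip hc hΦ hkb f)
    (integrable_shiftedLoss_fhat hL_meas hL_lip hc hΦ hkb g) hδ

theorem convexOn_shiftedRisk_fhat [IsFiniteMeasure P]
    (hL_meas :
      Measurable fun p : (X × Y) × (X × Y) × ℝ => L p.1.1 p.1.2 p.2.1.1 p.2.1.2 p.2.2)
    (hL_convex : ∀ x y x' y', ConvexOn ℝ univ (L x y x' y'))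
    (hL_lip : ∀ x y x' y' s t, |L x y x' y' t - L x y x' y' s| ≤ c * |t - s|) (hc : 0 ≤ c)
    (hΦ : Measurable Φ) (hkb : ∀ p, ‖Φ p‖ ≤ kb) :
    ConvexOn ℝ univ fun f : H => shiftedRisk L P (fhat Φ f) := by
  refine ⟨convex_univ, fun f _ g _ a b ha hb hab => ?_⟩
  have hint := integrable_shiftedLoss_fhat (P := P) hL_meas hL_lip hc hΦ hkb
  simp only [smul_eq_mul, fhat_smul_add_smul]
  exact shiftedRisk_smul_add_smul_le hL_convex ha hb hab (hint f) (hint g)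
    (by simpa [fhat_smul_add_smul] using hint (a • f + b • g))

theorem strongConvexOn_regRisk [IsFiniteMeasure P]
    (hL_meas :
      Measurable fun p : (X × Y) × (X × Y) × ℝ => L p.1.1 p.1.2 p.2.1.1 p.2.1.2 p.2.2)
    (hL_convex : ∀ x y x' y', ConvexOn ℝ univ (L x y x' y'))
    (hL_lip : ∀ x y x' y' s t, |L x y x' y' t - L x y x' y' s| ≤ c * |t - s|) (hc : 0 ≤ c)
    (hΦ : Measurable Φ) (hkb : ∀ p, ‖Φ p‖ ≤ kb) (lam : ℝ) :
    StrongConvexOn univ (2 * lam) (regRisk L Φ P lam) := by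
  rw [strongConvexOn_iff_convex]
  convert convexOn_shiftedRisk_fhat (P := P) hL_meas hL_convex hL_lip hc hΦ hkb using 2 with f
  simp only [regRisk]
  ring

theorem le_regRisk [IsProbabilityMeasure P]
    (hL_meas :
      Measurable fun p : (X × Y) × (X × Y) × ℝ => L p.1.1 p.1.2 p.2.1.1 p.2.1.2 p.2.2)
    (hL_lip : ∀ x y x' y' s t, |L x y x' y' t - L x y x' y' s| ≤ c * |t - s|) (hc : 0 ≤ c)
    (hΦ : Measurable Φ) (hkb : ∀ p, ‖Φ p‖ ≤ kb) {lam : ℝ} (hlam : 0 < lam) (f : H) :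
    -((c * kb) ^ 2 / (4 * lam)) ≤ regRisk L Φ P lam f := by
  have hrisk := abs_shiftedRisk_fhat_sub_le (P := P) hL_meas hL_lip hc hΦ hkb f 0
  rw [fhat_zero, shiftedRisk_zero, sub_zero, sub_zero] at hrisk
  have hsq : 0 ≤ (2 * lam * ‖f‖ - c * kb) ^ 2 / (4 * lam) := by positivity
  have hexpand : (2 * lam * ‖f‖ - c * kb) ^ 2 / (4 * lam) =
      lam * ‖f‖ ^ 2 - c * kb * ‖f‖ + (c * kb) ^ 2 / (4 * lam) := by
    field_simp
    ring
  rw [regRisk]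
  linarith [neg_abs_le (shiftedRisk L P (fhat Φ f))]

theorem continuous_regRisk [IsProbabilityMeasure P]
    (hL_meas :
      Measurable fun p : (X × Y) × (X × Y) × ℝ => L p.1.1 p.1.2 p.2.1.1 p.2.1.2 p.2.2)
    (hL_lip : ∀ x y x' y' s t, |L x y x' y' t - L x y x' y' s| ≤ c * |t - s|) (hc : 0 ≤ c)
    (hΦ : Measurable Φ) (hkb : ∀ p, ‖Φ p‖ ≤ kb) (lam : ℝ) :
    Continuous (regRisk L Φ P lam) := by
  have hrisk : LipschitzWith (c * kb).toNNReal fun f : H => shiftedRisk L P (fhat Φ f) :=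
    .of_dist_le' fun f g => by
      simpa [Real.dist_eq, dist_eq_norm] using
        abs_shiftedRisk_fhat_sub_le hL_meas hL_lip hc hΦ hkb f g
  exact hrisk.continuous.add (continuous_const.mul (continuous_norm.pow 2))

end RegularizedRisk

theorem regularized_minimizer_exists_general
    {X Y H : Type*} [MeasurableSpace X] [MeasurableSpace Y]
    [NormedAddCommGroup H] [InnerProductSpace ℝ H] [CompleteSpace H]
    [MeasurableSpace H] [BorelSpace H]
    (L : X → Y → X → Y → ℝ → ℝ)
    (hL_meas : Measurable fun p : (X × Y) × (X × Y) × ℝ => L p.1.1 p.1.2 p.2.1.1 p.2.1.2 p.2.2)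
    (hL_convex : ∀ x y x' y', ConvexOn ℝ Set.univ (L x y x' y'))
    (c : ℝ) (hc : 0 ≤ c)
    (hL_lip : ∀ x y x' y' s t, |L x y x' y' t - L x y x' y' s| ≤ c * |t - s|)
    (Φ : X × X → H) (hΦ : Measurable Φ)
    (kb : ℝ) (hkb : ∀ p : X × X, ‖Φ p‖ ≤ kb)
    (P : Measure (X × Y)) [IsProbabilityMeasure P]
    (lam : ℝ) (hlam : 0 < lam) :
    ∃ f : H, ∀ g : H, regRisk L Φ P lam f ≤ regRisk L Φ P lam g :=
  (strongConvexOn_regRisk hL_meas hL_convex hL_lip hc hΦ hkb lam).exists_forall_le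
    (by positivity)
    ⟨_, forall_mem_range.2 (le_regRisk hL_meas hL_lip hc hΦ hkb hlam)⟩
    (continuous_regRisk hL_meas hL_lip hc hΦ hkb lam).lowerSemicontinuous

/-- **Existence of the regularized minimizer** (convex case). If `L` is Lipschitz continuous
and convex in its fifth argument and the kernel is bounded
(`‖Φ(x,x')‖ ≤ ‖k‖_∞ = kb < ∞` for all `(x,x')`), then for every `λ > 0` there exists a
minimizer of the regularized shifted risk over `H`. -/
theorem regularized_minimizer_exists
    {X Y H : Type*} [MeasurableSpace X] [MeasurableSpace Y]
    [NormedAddCommGroup H] [InnerProductSpace ℝ H] [CompleteSpace H]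
    [MeasurableSpace H] [BorelSpace H]
    (L : X → Y → X → Y → ℝ → ℝ)
    (hL_meas : Measurable fun p : (X × Y) × (X × Y) × ℝ => L p.1.1 p.1.2 p.2.1.1 p.2.1.2 p.2.2)
    (hL_nonneg : ∀ x y x' y' t, 0 ≤ L x y x' y' t)
    (hL_convex : ∀ x y x' y', ConvexOn ℝ Set.univ (L x y x' y'))
    (c : ℝ) (hc : 0 ≤ c)
    (hL_lip : ∀ x y x' y' s t, |L x y x' y' t - L x y x' y' s| ≤ c * |t - s|)
    (Φ : X × X → H) (hΦ : Measurable Φ)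
    (kb : ℝ) (hkb : ∀ p : X × X, ‖Φ p‖ ≤ kb)
    (P : Measure (X × Y)) [IsProbabilityMeasure P]
    (lam : ℝ) (hlam : 0 < lam) :
    ∃ f : H, ∀ g : H, regRisk L Φ P lam f ≤ regRisk L Φ P lam g :=
  regularized_minimizer_exists_general L hL_meas hL_convex c hc hL_lip Φ hΦ kb hkb P lam hlam
end

section
/- Under the standing assumptions, fix a Borel probability measure P on X×Y, λ > 0, and a point (x₀,y₀) ∈ X×Y, and set P_ε := (1−ε)P + ε·δ_{(x₀,y₀)} for ε ∈ [0,1), where δ_{(x₀,y₀)} is the Dirac measure. Then the influence function IF((x₀,y₀); S, P) := lim_{ε→0⁺} (f_{L*,P_ε,λ} − f_{L*,P,λ})/ε exists in H, satisfies M(P)(IF) = −T(δ_{(x₀,y₀)};P) where T(δ_{(x₀,y₀)};P) = −2∫ L'·Φ d(P⊗P) + ∫ [L'(x,y,x₀,y₀)·Φ(x,x₀) + L'(x₀,y₀,x',y')·Φ(x₀,x')] d(P⊗P) with L' the partial derivative D₅L evaluated along f̂_{L*,P,λ}, and its norm is bounded uniformly in (x₀,y₀): ‖IF((x₀,y₀);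 S, P)‖_H ≤ (8/λ)·‖k‖_∞·|L|₁. -/
open MeasureTheory

open Filter Topology

/-!
The minimiser `f_Q` of the regularised risk satisfies the first-order condition
`2λ f_Q + A_Q f_Q = 0`, where `A_Q f = ∫ D₅L(f̂) Φ d(Q⊗Q)` is the gradient of the risk; convexity
of `L` makes `A_Q` a monotone operator. Expanding
`P_ε⊗P_ε = (1-ε)² P⊗P + ε(1-ε)(P⊗δ + δ⊗P) + ε² δ⊗δ` turns the condition for `f_ε` into
`(2λ + A)f_ε - (2λ + A)f_P = ε q_ε` with `q_ε → 2A f_P - B f_P`, where `A = A_{P⊗P}` and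
`B = A_{P⊗δ + δ⊗P}`; strong monotonicity of `2λ + A` gives `f_ε - f_P = O(ε)` along the way.
`A` is Fréchet differentiable at `f_P`, and its derivative `A'` is positive semidefinite because
`A` is monotone, so `2λ + A'` is bounded below by `2λ`: it has closed range and a continuous
inverse on it. Hence the difference quotients `(f_ε - f_P)/ε` converge to the solution of
`(2λ + A')v = 2A f_P - B f_P`, and `‖v‖ ≤ ‖2A f_P - B f_P‖/(2λ) ≤ 2‖k‖_∞|L|₁/λ`.
-/

open Asymptotics InnerProductSpace
open scoped RealInnerProductSpace ENNReal

theorem measurable_uncurry_of_hasDerivAt {Z : Type*} [MeasurableSpace Z] {F F' : Z → ℝ → ℝ}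
    (hF : Measurable (Function.uncurry F)) (hd : ∀ z t, HasDerivAt (F z) (F' z t) t) :
    Measurable (Function.uncurry F') := by
  have hstep : ∀ t : ℝ, Tendsto (fun n : ℕ => t + 1 / ((n : ℝ) + 1)) atTop (𝓝[>] t) := fun t =>
    tendsto_nhdsWithin_iff.2 ⟨by simpa using tendsto_one_div_add_atTop_nhds_zero_nat.const_add t,
      Eventually.of_forall fun n => lt_add_of_pos_right t Nat.one_div_pos_of_nat⟩
  refine measurable_of_tendsto_metrizable
    (f := fun n (p : Z × ℝ) => slope (F p.1) p.2 (p.2 + 1 / ((n : ℝ) + 1))) (fun n => ?_)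
    (tendsto_pi_nhds.2 fun p =>
      ((hd p.1 p.2).tendsto_slope.mono_left (nhdsGT_le_nhdsNE p.2)).comp (hstep p.2))
  simp only [slope_def_field, add_sub_cancel_left]
  exact ((hF.comp (measurable_fst.prodMk (measurable_snd.add_const _))).sub hF).div_const _

theorem ConvexOn.monotone_of_hasDerivAt {g g' : ℝ → ℝ} (hg : ConvexOn ℝ Set.univ g)
    (hd : ∀ t, HasDerivAt g (g' t) t) : Monotone g' := by
  have h := hg.monotoneOn_deriv fun t _ => (hd t).differentiableAt
  rw [funext fun t => (hd t).deriv] at h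
  exact fun s t hst => h trivial trivial hst

theorem HasDerivAt.abs_le_of_abs_sub_le_mul {g : ℝ → ℝ} {d t c : ℝ}
    (hlip : ∀ s u, |g u - g s| ≤ c * |u - s|) (hd : HasDerivAt g d t) : |d| ≤ c := by
  have hc : 0 ≤ c := by simpa using (abs_nonneg _).trans (hlip 0 1)
  simpa [Real.coe_toNNReal _ hc] using hd.le_of_lipschitz
    (LipschitzWith.of_dist_le_mul (K := c.toNNReal) fun u s => by
      simpa [Real.dist_eq, hc] using hlip s u)

theorem norm_smul_le_of_abs_le {E : Type*} [NormedAddCommGroup E] [NormedSpace ℝ E]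
    {a c K : ℝ} {u : E} (ha : |a| ≤ c) (hu : ‖u‖ ≤ K) : ‖a • u‖ ≤ c * K := by
  rw [norm_smul, Real.norm_eq_abs]
  exact mul_le_mul ha hu (norm_nonneg _) ((abs_nonneg _).trans ha)

theorem norm_two_sub_smul_sub_smul_sub_smul_le {E : Type*} [NormedAddCommGroup E]
    [NormedSpace ℝ E] {a b c : E} {M ε : ℝ} (hε₀ : 0 ≤ ε) (hε₁ : ε ≤ 1) (ha : ‖a‖ ≤ M)
    (hb : ‖b‖ ≤ 2 * M) (hc : ‖c‖ ≤ M) : ‖(2 - ε) • a - (1 - ε) • b - ε • c‖ ≤ 5 * M := by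
  calc ‖(2 - ε) • a - (1 - ε) • b - ε • c‖ ≤ ‖(2 - ε) • a‖ + ‖(1 - ε) • b‖ + ‖ε • c‖ :=
        (norm_sub_le _ _).trans (add_le_add_left (norm_sub_le _ _) _)
    _ = (2 - ε) * ‖a‖ + (1 - ε) * ‖b‖ + ε * ‖c‖ := by
        rw [norm_smul, norm_smul, norm_smul, Real.norm_of_nonneg (by linarith),
          Real.norm_of_nonneg (by linarith), Real.norm_of_nonneg hε₀]
    _ ≤ 5 * M := by
        nlinarith [norm_nonneg a, norm_nonneg b, norm_nonneg c]

section MonotoneOperator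

variable {H : Type*} [NormedAddCommGroup H] [InnerProductSpace ℝ H]

def IsMonotoneOperator (A : H → H) : Prop :=
  ∀ f g, 0 ≤ ⟪A f - A g, f - g⟫

theorem ContinuousLinearMap.isMonotoneOperator {T : H →L[ℝ] H} (hT : ∀ w, 0 ≤ ⟪T w, w⟫) :
    IsMonotoneOperator T := fun f g => by
  rw [← map_sub]
  exact hT _

theorem IsMonotoneOperator.mul_norm_sub_le {A : H → H} (hA : IsMonotoneOperator A) (μ : ℝ)
    (f g : H) : μ * ‖f - g‖ ≤ ‖(μ • f + A f) - (μ • g + A g)‖ := by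
  have hinner : μ * ‖f - g‖ ^ 2 ≤ ⟪(μ • f + A f) - (μ • g + A g), f - g⟫ := by
    have : (μ • f + A f) - (μ • g + A g) = μ • (f - g) + (A f - A g) := by module
    rw [this, inner_add_left, real_inner_smul_left, real_inner_self_eq_norm_sq]
    linarith [hA f g]
  have hcs := real_inner_le_norm ((μ • f + A f) - (μ • g + A g)) (f - g)
  rcases (norm_nonneg (f - g)).eq_or_lt with h | h
  · rw [← h, mul_zero]
    exact norm_nonneg _
  · nlinarith

theorem IsMonotoneOperator.inner_apply_self_nonneg {A : H → H} {T : H →L[ℝ] H} {x : H}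
    (hA : IsMonotoneOperator A) (hT : HasFDerivAt A T x) (w : H) : 0 ≤ ⟪T w, w⟫ := by
  have hline : HasDerivAt (fun t : ℝ => A (x + t • w)) (T w) 0 := by
    have hx : HasFDerivAt A T (x + (0 : ℝ) • w) := by simpa using hT
    simpa [Function.comp_def] using
      hx.comp_hasDerivAt (0 : ℝ) (((hasDerivAt_id (0 : ℝ)).smul_const w).const_add x)
  have hslope := hline.tendsto_slope.mono_left (nhdsGT_le_nhdsNE (0 : ℝ))
  refine ge_of_tendsto (hslope.inner tendsto_const_nhds) ?_
  filter_upwards [self_mem_nhdsWithin] with t (ht : 0 < t)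
  have := hA (x + t • w) x
  rw [add_sub_cancel_left, inner_smul_right] at this
  rw [slope_def_module, sub_zero, zero_smul, add_zero, inner_smul_left, conj_trivial]
  exact mul_nonneg (inv_nonneg.2 ht.le) ((mul_nonneg_iff_of_pos_left ht).1 this)

theorem IsMonotoneOperator.tendsto_nhds_of_norm_le {A : H → H} {x₀ : H} {μ M : ℝ}
    {y : ℝ → H} (hA : IsMonotoneOperator A) (hμ : 0 < μ)
    (hy : ∀ᶠ ε in 𝓝[>] 0, ‖(μ • y ε + A (y ε)) - (μ • x₀ + A x₀)‖ ≤ M * ε) :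
    Tendsto y (𝓝[>] 0) (𝓝 x₀) := by
  have hlin : Tendsto (fun ε : ℝ => M / μ * ε) (𝓝[>] 0) (𝓝 0) := by
    have h0 : Tendsto (fun ε : ℝ => ε) (𝓝[>] 0) (𝓝 0) :=
      tendsto_nhdsWithin_of_tendsto_nhds tendsto_id
    simpa using h0.const_mul (M / μ)
  rw [tendsto_iff_norm_sub_tendsto_zero]
  refine squeeze_zero' (Eventually.of_forall fun ε => norm_nonneg _) ?_ hlin
  filter_upwards [hy] with ε hε
  rw [div_mul_eq_mul_div, le_div_iff₀' hμ]
  exact (hA.mul_norm_sub_le μ (y ε) x₀).trans hε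

theorem IsMonotoneOperator.tendsto_inv_smul_sub_of_eq_smul {A B C : H → H} {x₀ : H}
    {y : ℝ → H} {μ M : ℝ} (hA : IsMonotoneOperator A) (hμ : 0 < μ) (hAx₀ : ContinuousAt A x₀)
    (hBx₀ : ContinuousAt B x₀) (hA_le : ∀ f, ‖A f‖ ≤ M) (hB_le : ∀ f, ‖B f‖ ≤ 2 * M)
    (hC_le : ∀ f, ‖C f‖ ≤ M) (hx₀ : μ • x₀ + A x₀ = 0)
    (hy : ∀ ε ∈ Set.Ioo (0 : ℝ) 1,
      μ • y ε + A (y ε) = ε • ((2 - ε) • A (y ε) - (1 - ε) • B (y ε) - ε • C (y ε))) :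
    Tendsto (fun ε => ε⁻¹ • ((μ • y ε + A (y ε)) - (μ • x₀ + A x₀))) (𝓝[>] 0)
      (𝓝 ((2 : ℝ) • A x₀ - B x₀)) := by
  have hq : ∀ ε ∈ Set.Ioo (0 : ℝ) 1, ε⁻¹ • ((μ • y ε + A (y ε)) - (μ • x₀ + A x₀)) =
      (2 - ε) • A (y ε) - (1 - ε) • B (y ε) - ε • C (y ε) := fun ε hε => by
    rw [hx₀, sub_zero, hy ε hε, smul_smul, inv_mul_cancel₀ hε.1.ne', one_smul]
  have hIoo : Set.Ioo (0 : ℝ) 1 ∈ 𝓝[>] 0 := Ioo_mem_nhdsGT (zero_lt_one' ℝ)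
  have hy_lim : Tendsto y (𝓝[>] 0) (𝓝 x₀) := by
    refine hA.tendsto_nhds_of_norm_le hμ (M := 5 * M) ?_
    filter_upwards [hIoo] with ε hε
    have := norm_two_sub_smul_sub_smul_sub_smul_le hε.1.le hε.2.le (hA_le (y ε)) (hB_le (y ε))
      (hC_le (y ε))
    rw [← hq ε hε, norm_smul, norm_inv, Real.norm_of_nonneg hε.1.le, inv_mul_le_iff₀ hε.1] at this
    linarith
  have hε : Tendsto (fun ε : ℝ => ε) (𝓝[>] 0) (𝓝 0) :=
    tendsto_nhdsWithin_of_tendsto_nhds tendsto_id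
  have hCε : Tendsto (fun ε => ε • C (y ε)) (𝓝[>] 0) (𝓝 0) :=
    squeeze_zero_norm (a := fun ε => ‖ε‖ * M) (fun ε => by
      rw [norm_smul]; exact mul_le_mul_of_nonneg_left (hC_le _) (norm_nonneg _))
      (by simpa using hε.norm.mul_const M)
  have := (((hε.const_sub 2).smul (hAx₀.tendsto.comp hy_lim)).sub
    ((hε.const_sub 1).smul (hBx₀.tendsto.comp hy_lim))).sub hCε
  rw [sub_zero, sub_zero, sub_zero, one_smul] at this
  refine this.congr' ?_
  filter_upwards [hIoo] with ε hε
  exact (hq ε hε).symm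

theorem IsMonotoneOperator.exists_tendsto_slope [CompleteSpace H] {A : H → H} {T : H →L[ℝ] H}
    {x₀ b : H} {μ : ℝ} {y : ℝ → H} (hA : IsMonotoneOperator A) (hμ : 0 < μ)
    (hT : HasFDerivAt A T x₀)
    (hy : Tendsto (fun ε => ε⁻¹ • ((μ • y ε + A (y ε)) - (μ • x₀ + A x₀))) (𝓝[>] 0) (𝓝 b)) :
    ∃ v, Tendsto (fun ε => ε⁻¹ • (y ε - x₀)) (𝓝[>] 0) (𝓝 v) ∧ μ • v + T v = b ∧
      μ * ‖v‖ ≤ ‖b‖ := by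
  set S : H →L[ℝ] H := μ • ContinuousLinearMap.id ℝ H + T
  have hS : ∀ w, S w = μ • w + T w := fun w => rfl
  have hS_bdd : ∀ w, μ * ‖w‖ ≤ ‖S w‖ := fun w => by
    simpa [hS] using (T.isMonotoneOperator (hA.inner_apply_self_nonneg hT)).mul_norm_sub_le μ w 0
  have hS_emb : IsClosedEmbedding S := by
    refine (S.antilipschitz_of_bound (K := (μ⁻¹).toNNReal) fun w => ?_).isClosedEmbedding
      S.uniformContinuous
    rw [Real.coe_toNNReal _ (inv_nonneg.2 hμ.le), inv_mul_eq_div, le_div_iff₀' hμ]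
    exact hS_bdd w
  have hy_sub : (fun ε => y ε - x₀) =O[𝓝[>] 0] fun ε => ε := by
    refine IsBigO.of_bound ((‖b‖ + 1) / μ) ?_
    filter_upwards [self_mem_nhdsWithin, hy.norm.eventually (gt_mem_nhds (lt_add_one ‖b‖))]
      with ε (hε : 0 < ε) hq
    rw [norm_smul, norm_inv, Real.norm_of_nonneg hε.le, inv_mul_lt_iff₀ hε] at hq
    have := hA.mul_norm_sub_le μ (y ε) x₀
    rw [div_mul_eq_mul_div, le_div_iff₀' hμ, Real.norm_of_nonneg hε.le]
    nlinarith
  have hrem : Tendsto (fun ε => ε⁻¹ • (A (y ε) - A x₀ - T (y ε - x₀))) (𝓝[>] 0) (𝓝 0) := by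
    have hlim : Tendsto (fun ε => y ε - x₀) (𝓝[>] 0) (𝓝 0) :=
      hy_sub.trans_tendsto (tendsto_id.mono_left nhdsWithin_le_nhds)
    have := ((hasFDerivAt_iff_isLittleO_nhds_zero.1 hT).comp_tendsto hlim).trans_isBigO hy_sub
    refine IsLittleO.tendsto_inv_smul_nhds_zero ?_
    simpa [Function.comp_def] using this
  have hSv : Tendsto (fun ε => S (ε⁻¹ • (y ε - x₀))) (𝓝[>] 0) (𝓝 b) := by
    have := hy.sub hrem
    rw [sub_zero] at this
    refine this.congr fun ε => ?_
    simp only [map_smul, map_sub, hS]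
    module
  obtain ⟨v, rfl⟩ : b ∈ Set.range S :=
    hS_emb.isClosed_range.mem_of_tendsto hSv (Eventually.of_forall fun ε => ⟨_, rfl⟩)
  exact ⟨v, hS_emb.tendsto_nhds_iff.2 hSv, rfl, hS_bdd v⟩

end MonotoneOperator

section LossGradient

variable {Ω H : Type*} [MeasurableSpace Ω] [NormedAddCommGroup H] [InnerProductSpace ℝ H]

/- For a pairwise loss, `Ω = (X × Y) × (X × Y)`, `ℓ ω = L x y x' y'` and `φ ω = Φ (x, x')` at
`ω = ((x, y), (x', y'))`, so that `lossRisk (Q.prod Q) ℓ φ f = R_{L*,Q}(f̂)`; the operator `M(P)` is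
`2λ • id + lossHessian (P.prod P) D₅D₅L φ f_{L*,P,λ}`. -/
noncomputable def lossRisk (μ : Measure Ω) (ℓ : Ω → ℝ → ℝ) (φ : Ω → H) (f : H) : ℝ :=
  ∫ ω, (ℓ ω ⟪f, φ ω⟫ - ℓ ω 0) ∂μ

noncomputable def lossGradient (μ : Measure Ω) (ℓ' : Ω → ℝ → ℝ) (φ : Ω → H) (f : H) : H :=
  ∫ ω, ℓ' ω ⟪f, φ ω⟫ • φ ω ∂μ

noncomputable def lossHessian (μ : Measure Ω) (ℓ'' : Ω → ℝ → ℝ) (φ : Ω → H) (f : H) :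
    H →L[ℝ] H :=
  ∫ ω, ℓ'' ω ⟪f, φ ω⟫ • rankOne ℝ (φ ω) (φ ω) ∂μ

theorem Measurable.comp_inner {g : Ω → ℝ → ℝ} (hg : Measurable (Function.uncurry g))
    {φ : Ω → H} (hφ : StronglyMeasurable φ) (f : H) : Measurable fun ω => g ω ⟪f, φ ω⟫ :=
  hg.comp (measurable_id.prodMk (stronglyMeasurable_const.inner hφ).measurable)

theorem HasDerivAt.comp_inner_left {g : ℝ → ℝ} {d : ℝ} {f v : H} (hg : HasDerivAt g d ⟪f, v⟫) :
    HasFDerivAt (fun f => g ⟪f, v⟫) (d • innerSL ℝ v) f := by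
  have hinner : HasFDerivAt (fun f : H => ⟪f, v⟫) (innerSL ℝ v) f :=
    (innerSL ℝ v).hasFDerivAt.congr_of_eventuallyEq
      (Eventually.of_forall fun w => real_inner_comm v w)
  exact hg.comp_hasFDerivAt f hinner

theorem integrable_smul_of_abs_le {E : Type*} [NormedAddCommGroup E] [NormedSpace ℝ E]
    {μ : Measure Ω} [IsFiniteMeasure μ] {a : Ω → ℝ} {u : Ω → E} {c K : ℝ} (ha : Measurable a)
    (hu : StronglyMeasurable u) (hac : ∀ ω, |a ω| ≤ c) (huK : ∀ ω, ‖u ω‖ ≤ K) :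
    Integrable (fun ω => a ω • u ω) μ :=
  .of_bound (ha.stronglyMeasurable.smul hu).aestronglyMeasurable (c * K)
    (ae_of_all _ fun ω => norm_smul_le_of_abs_le (hac ω) (huK ω))

variable {μ : Measure Ω} [IsFiniteMeasure μ] {φ : Ω → H} {K : ℝ}

theorem norm_lossGradient_le {ℓ' : Ω → ℝ → ℝ} {c : ℝ} (hℓ'b : ∀ ω t, |ℓ' ω t| ≤ c)
    (hφb : ∀ ω, ‖φ ω‖ ≤ K) (f : H) : ‖lossGradient μ ℓ' φ f‖ ≤ c * K * μ.real Set.univ :=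
  norm_integral_le_of_norm_le_const
    (ae_of_all _ fun ω => norm_smul_le_of_abs_le (hℓ'b ω _) (hφb ω))

theorem integrable_lossHessian_integrand {ℓ'' : Ω → ℝ → ℝ} {c₂ : ℝ}
    (hℓ'' : Measurable (Function.uncurry ℓ'')) (hℓ''b : ∀ ω t, |ℓ'' ω t| ≤ c₂)
    (hφ : StronglyMeasurable φ) (hφb : ∀ ω, ‖φ ω‖ ≤ K) (f : H) :
    Integrable (fun ω => ℓ'' ω ⟪f, φ ω⟫ • rankOne ℝ (φ ω) (φ ω)) μ :=
  integrable_smul_of_abs_le (hℓ''.comp_inner hφ f)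
    (((rankOne ℝ).continuous.clm_apply continuous_id).comp_stronglyMeasurable hφ)
    (fun ω => hℓ''b ω _) fun ω => by
      rw [norm_rankOne]
      exact mul_le_mul (hφb ω) (hφb ω) (norm_nonneg _) ((norm_nonneg _).trans (hφb ω))

theorem hasFDerivAt_lossGradient {ℓ' ℓ'' : Ω → ℝ → ℝ} {c c₂ : ℝ}
    (hℓ' : Measurable (Function.uncurry ℓ')) (hℓ'' : Measurable (Function.uncurry ℓ''))
    (hd : ∀ ω t, HasDerivAt (ℓ' ω) (ℓ'' ω t) t) (hℓ'b : ∀ ω t, |ℓ' ω t| ≤ c)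
    (hℓ''b : ∀ ω t, |ℓ'' ω t| ≤ c₂) (hφ : StronglyMeasurable φ) (hφb : ∀ ω, ‖φ ω‖ ≤ K)
    (f : H) : HasFDerivAt (lossGradient μ ℓ' φ) (lossHessian μ ℓ'' φ f) f := by
  refine hasFDerivAt_integral_of_dominated_of_fderiv_le (F := fun g ω => ℓ' ω ⟪g, φ ω⟫ • φ ω)
    (F' := fun g ω => ℓ'' ω ⟪g, φ ω⟫ • rankOne ℝ (φ ω) (φ ω)) (bound := fun _ => c₂ * (K * K))
    Filter.univ_mem (Eventually.of_forall fun g => ?_)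
    (integrable_smul_of_abs_le (hℓ'.comp_inner hφ f) hφ (fun ω => hℓ'b ω _) hφb)
    (integrable_lossHessian_integrand hℓ'' hℓ''b hφ hφb f).aestronglyMeasurable
    (ae_of_all _ fun ω g _ => ?_) (integrable_const _) (ae_of_all _ fun ω g _ => ?_)
  · exact ((hℓ'.comp_inner hφ g).stronglyMeasurable.smul hφ).aestronglyMeasurable
  · rw [norm_smul, norm_rankOne, Real.norm_eq_abs]
    exact mul_le_mul (hℓ''b ω _) (mul_le_mul (hφb ω) (hφb ω) (norm_nonneg _)
      ((norm_nonneg _).trans (hφb ω))) (by positivity) ((abs_nonneg _).trans (hℓ''b ω 0))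
  · convert ((hd ω _).comp_inner_left (f := g)).smul_const (φ ω) using 1
    ext v
    simp [rankOne_apply, smul_smul]

theorem lossHessian_apply {ℓ'' : Ω → ℝ → ℝ} {c₂ : ℝ}
    (hℓ'' : Measurable (Function.uncurry ℓ'')) (hℓ''b : ∀ ω t, |ℓ'' ω t| ≤ c₂)
    (hφ : StronglyMeasurable φ) (hφb : ∀ ω, ‖φ ω‖ ≤ K) (f v : H) :
    lossHessian μ ℓ'' φ f v = ∫ ω, (ℓ'' ω ⟪f, φ ω⟫ * ⟪φ ω, v⟫) • φ ω ∂μ := by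
  rw [lossHessian, ContinuousLinearMap.integral_apply
    (integrable_lossHessian_integrand hℓ'' hℓ''b hφ hφb f)]
  simp [rankOne_apply, smul_smul]

variable [CompleteSpace H]

theorem hasFDerivAt_lossRisk {ℓ ℓ' : Ω → ℝ → ℝ} {c : ℝ} (hℓ : Measurable (Function.uncurry ℓ))
    (hℓ' : Measurable (Function.uncurry ℓ')) (hd : ∀ ω t, HasDerivAt (ℓ ω) (ℓ' ω t) t)
    (hlip : ∀ ω s t, |ℓ ω t - ℓ ω s| ≤ c * |t - s|) (hφ : StronglyMeasurable φ)
    (hφb : ∀ ω, ‖φ ω‖ ≤ K) (f : H) :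
    HasFDerivAt (lossRisk μ ℓ φ) (innerSL ℝ (lossGradient μ ℓ' φ f)) f := by
  have hℓ'b : ∀ ω t, |ℓ' ω t| ≤ c := fun ω t => (hd ω t).abs_le_of_abs_sub_le_mul (hlip ω)
  have hmeas : ∀ g : H, Measurable fun ω => ℓ ω ⟪g, φ ω⟫ - ℓ ω 0 := fun g =>
    (hℓ.comp_inner hφ g).sub (hℓ.comp (measurable_id.prodMk measurable_const))
  have hint : Integrable (fun ω => ℓ ω ⟪f, φ ω⟫ - ℓ ω 0) μ := by
    refine .of_bound (hmeas f).aestronglyMeasurable (c * (‖f‖ * K)) (ae_of_all _ fun ω => ?_)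
    rw [Real.norm_eq_abs]
    refine (hlip ω 0 _).trans (mul_le_mul_of_nonneg_left ?_ ((abs_nonneg _).trans (hℓ'b ω 0)))
    rw [sub_zero]
    exact (abs_real_inner_le_norm f (φ ω)).trans
      (mul_le_mul_of_nonneg_left (hφb ω) (norm_nonneg f))
  have hgrad_int : Integrable (fun ω => ℓ' ω ⟪f, φ ω⟫ • φ ω) μ :=
    integrable_smul_of_abs_le (hℓ'.comp_inner hφ f) hφ (fun ω => hℓ'b ω _) hφb
  have := hasFDerivAt_integral_of_dominated_of_fderiv_le (μ := μ)
    (F := fun g ω => ℓ ω ⟪g, φ ω⟫ - ℓ ω 0)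
    (F' := fun g ω => innerSL ℝ (ℓ' ω ⟪g, φ ω⟫ • φ ω)) (bound := fun _ => c * K) Filter.univ_mem
    (Eventually.of_forall fun g => (hmeas g).aestronglyMeasurable) hint
    ((innerSL ℝ).continuous.comp_aestronglyMeasurable hgrad_int.aestronglyMeasurable)
    (ae_of_all _ fun ω g _ => by
      rw [innerSL_apply_norm]; exact norm_smul_le_of_abs_le (hℓ'b ω _) (hφb ω))
    (integrable_const _)
    (ae_of_all _ fun ω g _ => by
      simpa [map_smulₛₗ] using ((hd ω _).comp_inner_left (f := g)).sub_const (ℓ ω 0))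
  rwa [(innerSL ℝ).integral_comp_commSL (fun r x => rfl) hgrad_int] at this

theorem two_mul_smul_add_lossGradient_eq_zero {ℓ ℓ' : Ω → ℝ → ℝ} {c lam : ℝ} {f₀ : H}
    (hℓ : Measurable (Function.uncurry ℓ)) (hℓ' : Measurable (Function.uncurry ℓ'))
    (hd : ∀ ω t, HasDerivAt (ℓ ω) (ℓ' ω t) t) (hlip : ∀ ω s t, |ℓ ω t - ℓ ω s| ≤ c * |t - s|)
    (hφ : StronglyMeasurable φ) (hφb : ∀ ω, ‖φ ω‖ ≤ K)
    (hmin : IsLocalMin (fun f => lossRisk μ ℓ φ f + lam * ‖f‖ ^ 2) f₀) :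
    (2 * lam) • f₀ + lossGradient μ ℓ' φ f₀ = 0 := by
  have hzero := hmin.hasFDerivAt_eq_zero ((hasFDerivAt_lossRisk hℓ hℓ' hd hlip hφ hφb f₀).add
    ((hasStrictFDerivAt_norm_sq f₀).hasFDerivAt.const_mul lam))
  set u := (2 * lam) • f₀ + lossGradient μ ℓ' φ f₀
  have hu : ⟪u, u⟫ = 0 := by
    have := congrArg (fun T => T u) hzero
    simp only [add_apply, coe_innerSL_apply, smul_apply, nsmul_eq_mul, Nat.cast_ofNat,
      smul_eq_mul, zero_apply] at this
    rw [inner_add_left, real_inner_smul_left]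
    linarith
  exact inner_self_eq_zero.1 hu

theorem isMonotoneOperator_lossGradient {ℓ' : Ω → ℝ → ℝ} {c : ℝ}
    (hℓ' : Measurable (Function.uncurry ℓ')) (hℓ'b : ∀ ω t, |ℓ' ω t| ≤ c)
    (hmono : ∀ ω, Monotone (ℓ' ω)) (hφ : StronglyMeasurable φ) (hφb : ∀ ω, ‖φ ω‖ ≤ K) :
    IsMonotoneOperator (lossGradient μ ℓ' φ) := by
  intro f g
  have hint : ∀ f : H, Integrable (fun ω => ℓ' ω ⟪f, φ ω⟫ • φ ω) μ := fun f =>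
    integrable_smul_of_abs_le (hℓ'.comp_inner hφ f) hφ (fun ω => hℓ'b ω _) hφb
  have hsub := integral_inner (𝕜 := ℝ) ((hint f).sub (hint g)) (f - g)
  simp only [Pi.sub_apply] at hsub
  rw [lossGradient, lossGradient, ← integral_sub (hint f) (hint g), real_inner_comm, ← hsub]
  refine integral_nonneg fun ω => ?_
  simp only [Pi.zero_apply, ← sub_smul, inner_smul_right, inner_sub_left]
  exact (monovary_id_iff.2 (hmono ω)).sub_mul_sub_nonneg _ _

end LossGradient

theorem MeasureTheory.Measure.prod_smul_add_smul {Z : Type*} [MeasurableSpace Z]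
    (μ ν : Measure Z) [SFinite μ] [SFinite ν] (a b : ℝ≥0∞) :
    (a • μ + b • ν).prod (a • μ + b • ν) =
      (a * a) • μ.prod μ + (a * b) • (μ.prod ν + ν.prod μ) + (b * b) • ν.prod ν := by
  simp only [Measure.add_prod, Measure.prod_add, Measure.prod_smul_left, Measure.prod_smul_right,
    smul_add, smul_smul]
  rw [mul_comm b a]
  abel

section BoundedIntegrals

variable {Z E : Type*} [MeasurableSpace Z] [NormedAddCommGroup E] [NormedSpace ℝ E]
  {F : Z × Z → E} {C : ℝ}

theorem integral_prod_smul_add_smul (μ ν : Measure Z) [IsFiniteMeasure μ] [IsFiniteMeasure ν]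
    {a b : ℝ≥0∞} (ha : a ≠ ∞) (hb : b ≠ ∞) (hF : StronglyMeasurable F) (hFb : ∀ z, ‖F z‖ ≤ C) :
    ∫ z, F z ∂(a • μ + b • ν).prod (a • μ + b • ν) =
      (a * a).toReal • ∫ z, F z ∂μ.prod μ + (a * b).toReal • ∫ z, F z ∂(μ.prod ν + ν.prod μ)
        + (b * b).toReal • ∫ z, F z ∂ν.prod ν := by
  have hint : ∀ (ρ : Measure (Z × Z)) [IsFiniteMeasure ρ], Integrable F ρ := fun ρ _ =>
    .of_bound hF.aestronglyMeasurable C (ae_of_all _ hFb)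
  have h₁ := (hint (μ.prod μ)).smul_measure (ENNReal.mul_ne_top ha ha)
  have h₂ := (hint (μ.prod ν + ν.prod μ)).smul_measure (ENNReal.mul_ne_top ha hb)
  have h₃ := (hint (ν.prod ν)).smul_measure (ENNReal.mul_ne_top hb hb)
  rw [Measure.prod_smul_add_smul, integral_add_measure (h₁.add_measure h₂) h₃,
    integral_add_measure h₁ h₂, integral_smul_measure, integral_smul_measure,
    integral_smul_measure]

theorem integral_prod_dirac_add_dirac_prod (P : Measure Z) [IsProbabilityMeasure P] (z₀ : Z)
    (hF : StronglyMeasurable F) (hFb : ∀ z, ‖F z‖ ≤ C) :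
    ∫ z, F z ∂(P.prod (Measure.dirac z₀) + (Measure.dirac z₀).prod P) =
      ∫ z, (F (z.1, z₀) + F (z₀, z.2)) ∂P.prod P := by
  have hint : ∀ (ρ : Measure (Z × Z)) [IsFiniteMeasure ρ], Integrable F ρ := fun ρ _ =>
    .of_bound hF.aestronglyMeasurable C (ae_of_all _ hFb)
  have hleft : Measurable fun z : Z => (z, z₀) := measurable_id.prodMk measurable_const
  have hright : Measurable fun z : Z => (z₀, z) := measurable_const.prodMk measurable_id
  have hint_left : Integrable (fun z : Z × Z => F (z.1, z₀)) (P.prod P) :=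
    .of_bound (hF.comp_measurable (hleft.comp measurable_fst)).aestronglyMeasurable C
      (ae_of_all _ fun z => hFb _)
  have hint_right : Integrable (fun z : Z × Z => F (z₀, z.2)) (P.prod P) :=
    .of_bound (hF.comp_measurable (hright.comp measurable_snd)).aestronglyMeasurable C
      (ae_of_all _ fun z => hFb _)
  rw [integral_add_measure (hint _) (hint _), Measure.prod_dirac, Measure.dirac_prod,
    integral_map hleft.aemeasurable hF.aestronglyMeasurable,
    integral_map hright.aemeasurable hF.aestronglyMeasurable, integral_add hint_left hint_right,
    integral_fun_fst (fun z => F (z, z₀)), integral_fun_snd (fun z => F (z₀, z))]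
  simp

end BoundedIntegrals

section Contamination

variable {Z H : Type*} [MeasurableSpace Z] [NormedAddCommGroup H] [InnerProductSpace ℝ H]

noncomputable def contamination (P : Measure Z) (z₀ : Z) (ε : ℝ) : Measure Z :=
  ENNReal.ofReal (1 - ε) • P + ENNReal.ofReal ε • Measure.dirac z₀

theorem isProbabilityMeasure_contamination (P : Measure Z) [IsProbabilityMeasure P] (z₀ : Z)
    {ε : ℝ} (hε₀ : 0 ≤ ε) (hε₁ : ε ≤ 1) : IsProbabilityMeasure (contamination P z₀ ε) := by
  constructor
  simp [contamination, ← ENNReal.ofReal_add (sub_nonneg.2 hε₁) hε₀]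

theorem lossGradient_prod_contamination (P : Measure Z) [IsFiniteMeasure P] (z₀ : Z) {ε : ℝ}
    (hε₀ : 0 ≤ ε) (hε₁ : ε ≤ 1) {ℓ' : Z × Z → ℝ → ℝ} {φ : Z × Z → H} {c K : ℝ}
    (hℓ' : Measurable (Function.uncurry ℓ')) (hℓ'b : ∀ ω t, |ℓ' ω t| ≤ c)
    (hφ : StronglyMeasurable φ) (hφb : ∀ ω, ‖φ ω‖ ≤ K) (f : H) :
    lossGradient ((contamination P z₀ ε).prod (contamination P z₀ ε)) ℓ' φ f =
      (1 - ε) ^ 2 • lossGradient (P.prod P) ℓ' φ f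
        + (ε * (1 - ε)) • lossGradient (P.prod (.dirac z₀) + (Measure.dirac z₀).prod P) ℓ' φ f
        + ε ^ 2 • lossGradient ((Measure.dirac z₀).prod (.dirac z₀)) ℓ' φ f := by
  rw [lossGradient, contamination, integral_prod_smul_add_smul _ _ ENNReal.ofReal_ne_top
    ENNReal.ofReal_ne_top (F := fun ω => ℓ' ω ⟪f, φ ω⟫ • φ ω)
    ((hℓ'.comp_inner hφ f).stronglyMeasurable.smul hφ)
    (fun ω => norm_smul_le_of_abs_le (hℓ'b ω _) (hφb ω))]
  simp only [ENNReal.toReal_mul, ENNReal.toReal_ofReal hε₀,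
    ENNReal.toReal_ofReal (sub_nonneg.2 hε₁)]
  rw [mul_comm (1 - ε) ε, ← sq, ← sq]
  rfl

theorem two_mul_smul_add_lossGradient_eq_of_isLocalMin_contamination [CompleteSpace H]
    {ℓ ℓ' : Z × Z → ℝ → ℝ} {φ : Z × Z → H} {c K lam ε : ℝ} {g : H}
    (hℓ : Measurable (Function.uncurry ℓ)) (hℓ' : Measurable (Function.uncurry ℓ'))
    (hd : ∀ ω t, HasDerivAt (ℓ ω) (ℓ' ω t) t) (hlip : ∀ ω s t, |ℓ ω t - ℓ ω s| ≤ c * |t - s|)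
    (hφ : StronglyMeasurable φ) (hφb : ∀ ω, ‖φ ω‖ ≤ K) (P : Measure Z) [IsProbabilityMeasure P]
    (z₀ : Z) (hε₀ : 0 ≤ ε) (hε₁ : ε ≤ 1) (hg : IsLocalMin (fun f =>
      lossRisk ((contamination P z₀ ε).prod (contamination P z₀ ε)) ℓ φ f + lam * ‖f‖ ^ 2) g) :
    (2 * lam) • g + lossGradient (P.prod P) ℓ' φ g =
      ε • ((2 - ε) • lossGradient (P.prod P) ℓ' φ g
        - (1 - ε) • lossGradient (P.prod (.dirac z₀) + (Measure.dirac z₀).prod P) ℓ' φ g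
        - ε • lossGradient ((Measure.dirac z₀).prod (.dirac z₀)) ℓ' φ g) := by
  have := isProbabilityMeasure_contamination P z₀ hε₀ hε₁
  have hℓ'b : ∀ ω t, |ℓ' ω t| ≤ c := fun ω t => (hd ω t).abs_le_of_abs_sub_le_mul (hlip ω)
  have h := two_mul_smul_add_lossGradient_eq_zero hℓ hℓ' hd hlip hφ hφb hg
  rw [lossGradient_prod_contamination P z₀ hε₀ hε₁ hℓ' hℓ'b hφ hφb] at h
  linear_combination (norm := module) h

theorem exists_tendsto_inv_smul_sub_of_contamination [CompleteSpace H]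
    {ℓ ℓ' ℓ'' : Z × Z → ℝ → ℝ} {φ : Z × Z → H} {c c₂ K lam : ℝ}
    (hℓ : Measurable (Function.uncurry ℓ)) (hconv : ∀ ω, ConvexOn ℝ Set.univ (ℓ ω))
    (hlip : ∀ ω s t, |ℓ ω t - ℓ ω s| ≤ c * |t - s|)
    (hd : ∀ ω t, HasDerivAt (ℓ ω) (ℓ' ω t) t) (hd' : ∀ ω t, HasDerivAt (ℓ' ω) (ℓ'' ω t) t)
    (hℓ''b : ∀ ω t, |ℓ'' ω t| ≤ c₂) (hφ : StronglyMeasurable φ) (hφb : ∀ ω, ‖φ ω‖ ≤ K)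
    (P : Measure Z) [IsProbabilityMeasure P] (z₀ : Z) (hlam : 0 < lam) {fP : H}
    (hfP : IsLocalMin (fun f => lossRisk (P.prod P) ℓ φ f + lam * ‖f‖ ^ 2) fP) {fε : ℝ → H}
    (hfε : ∀ ε ∈ Set.Ioo (0 : ℝ) 1, IsLocalMin (fun f =>
      lossRisk ((contamination P z₀ ε).prod (contamination P z₀ ε)) ℓ φ f + lam * ‖f‖ ^ 2)
        (fε ε)) :
    ∃ v, Tendsto (fun ε => ε⁻¹ • (fε ε - fP)) (𝓝[>] 0) (𝓝 v) ∧
      (2 * lam) • v + ∫ ω, (ℓ'' ω ⟪fP, φ ω⟫ * ⟪φ ω, v⟫) • φ ω ∂(P.prod P) =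
        -((-2 : ℝ) • lossGradient (P.prod P) ℓ' φ fP
          + ∫ z, (ℓ' (z.1, z₀) ⟪fP, φ (z.1, z₀)⟫ • φ (z.1, z₀)
            + ℓ' (z₀, z.2) ⟪fP, φ (z₀, z.2)⟫ • φ (z₀, z.2)) ∂(P.prod P)) ∧
      lam * ‖v‖ ≤ 2 * c * K := by
  set δ := Measure.dirac z₀
  set A := lossGradient (P.prod P) ℓ' φ
  set B := lossGradient (P.prod δ + δ.prod P) ℓ' φ
  have hℓ' := measurable_uncurry_of_hasDerivAt hℓ hd
  have hℓ'' := measurable_uncurry_of_hasDerivAt hℓ' hd'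
  have hℓ'b : ∀ ω t, |ℓ' ω t| ≤ c := fun ω t => (hd ω t).abs_le_of_abs_sub_le_mul (hlip ω)
  have hA_mono : IsMonotoneOperator A := isMonotoneOperator_lossGradient hℓ' hℓ'b
    (fun ω => (hconv ω).monotone_of_hasDerivAt (hd ω)) hφ hφb
  have hderiv : ∀ (μ : Measure (Z × Z)) [IsFiniteMeasure μ] (f : H),
      HasFDerivAt (lossGradient μ ℓ' φ) (lossHessian μ ℓ'' φ f) f :=
    fun μ _ => hasFDerivAt_lossGradient hℓ' hℓ'' hd' hℓ'b hℓ''b hφ hφb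
  have hA_le : ∀ f, ‖A f‖ ≤ c * K := fun f => by
    simpa using norm_lossGradient_le (μ := P.prod P) hℓ'b hφb f
  have hB_le : ∀ f, ‖B f‖ ≤ 2 * (c * K) := fun f => by
    have := norm_lossGradient_le (μ := P.prod δ + δ.prod P) hℓ'b hφb f
    simp only [Measure.real, Measure.coe_add, Pi.add_apply, measure_univ, one_add_one_eq_two,
      ENNReal.toReal_ofNat] at this
    linarith
  have hq := hA_mono.tendsto_inv_smul_sub_of_eq_smul (by positivity : 0 < 2 * lam)
    (hderiv _ fP).continuousAt (hderiv _ fP).continuousAt hA_le hB_le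
    (fun f => by simpa using norm_lossGradient_le (μ := δ.prod δ) hℓ'b hφb f)
    (two_mul_smul_add_lossGradient_eq_zero hℓ hℓ' hd hlip hφ hφb hfP)
    (fun ε hε => two_mul_smul_add_lossGradient_eq_of_isLocalMin_contamination hℓ hℓ' hd hlip hφ
      hφb P z₀ hε.1.le hε.2.le (hfε ε hε))
  obtain ⟨v, hv, hveq, hvb⟩ := hA_mono.exists_tendsto_slope (by positivity) (hderiv _ fP) hq
  have hB : B fP = ∫ z, (ℓ' (z.1, z₀) ⟪fP, φ (z.1, z₀)⟫ • φ (z.1, z₀)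
      + ℓ' (z₀, z.2) ⟪fP, φ (z₀, z.2)⟫ • φ (z₀, z.2)) ∂(P.prod P) :=
    integral_prod_dirac_add_dirac_prod P z₀ (F := fun ω => ℓ' ω ⟪fP, φ ω⟫ • φ ω)
      ((hℓ'.comp_inner hφ fP).stronglyMeasurable.smul hφ)
      (fun ω => norm_smul_le_of_abs_le (hℓ'b ω _) (hφb ω))
  refine ⟨v, hv, ?_, ?_⟩
  · rw [← lossHessian_apply hℓ'' hℓ''b hφ hφb, hveq, ← hB]
    module
  · have := (norm_sub_le _ _).trans (add_le_add (norm_smul_le (2 : ℝ) (A fP)) (hB_le fP))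
    rw [Real.norm_two] at this
    nlinarith [hA_le fP]

end Contamination

theorem bounded_influence_function_general
    {X : Type*} [MetricSpace X] [TopologicalSpace.SeparableSpace X]
    [MeasurableSpace X] [BorelSpace X]
    {H : Type*} [NormedAddCommGroup H] [InnerProductSpace ℝ H] [CompleteSpace H]
    (Y : Set ℝ)
    (L D₅L D₅D₅L : X → Y → X → Y → ℝ → ℝ)
    (hL_meas : Measurable fun p : (X × Y) × (X × Y) × ℝ => L p.1.1 p.1.2 p.2.1.1 p.2.1.2 p.2.2)
    (hL_convex : ∀ x y x' y', ConvexOn ℝ Set.univ (L x y x' y'))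
    (c : ℝ)
    (hL_lip : ∀ x y x' y' s t, |L x y x' y' t - L x y x' y' s| ≤ c * |t - s|)
    (hD1 : ∀ x y x' y' t, HasDerivAt (L x y x' y') (D₅L x y x' y' t) t)
    (hD2 : ∀ x y x' y' t, HasDerivAt (D₅L x y x' y') (D₅D₅L x y x' y' t) t)
    (cL2 : ℝ) (hD2bdd : ∀ x y x' y' t, |D₅D₅L x y x' y' t| ≤ cL2)
    (Φ : X × X → H) (hΦcont : Continuous Φ)
    (kb : ℝ) (hkb : ∀ p : X × X, ‖Φ p‖ ≤ kb)
    (P : Measure (X × Y)) [IsProbabilityMeasure P]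
    (lam : ℝ) (hlam : 0 < lam)
    (x₀ : X) (y₀ : Y)
    (fP : H) (hfP : ∀ g : H, regRisk L Φ P lam fP ≤ regRisk L Φ P lam g)
    (fε : ℝ → H)
    (hfε : ∀ ε : ℝ, 0 ≤ ε → ε < 1 → ∀ g : H,
      regRisk L Φ
          (ENNReal.ofReal (1 - ε) • P + ENNReal.ofReal ε • Measure.dirac ((x₀, y₀) : X × Y))
          lam (fε ε)
        ≤ regRisk L Φ
            (ENNReal.ofReal (1 - ε) • P + ENNReal.ofReal ε • Measure.dirac ((x₀, y₀) : X × Y))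
            lam g) :
    ∃ v : H,
      Tendsto (fun ε : ℝ => ε⁻¹ • (fε ε - fP)) (nhdsWithin 0 (Set.Ioi 0)) (𝓝 v) ∧
      (2 * lam) • v +
          (∫ z : (X × Y) × (X × Y),
            (D₅D₅L z.1.1 z.1.2 z.2.1 z.2.2 (fhat Φ fP (z.1.1, z.2.1))
              * (@inner ℝ H _ (Φ (z.1.1, z.2.1)) v)) • Φ (z.1.1, z.2.1) ∂(P.prod P))
        = -(((-2 : ℝ)) • (∫ z : (X × Y) × (X × Y),
              (D₅L z.1.1 z.1.2 z.2.1 z.2.2 (fhat Φ fP (z.1.1, z.2.1))) • Φ (z.1.1, z.2.1)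
              ∂(P.prod P))
            + (∫ z : (X × Y) × (X × Y),
              ((D₅L z.1.1 z.1.2 x₀ y₀ (fhat Φ fP (z.1.1, x₀))) • Φ (z.1.1, x₀)
                + (D₅L x₀ y₀ z.2.1 z.2.2 (fhat Φ fP (x₀, z.2.1))) • Φ (x₀, z.2.1))
              ∂(P.prod P))) ∧
      ‖v‖ ≤ (8 / lam) * kb * c := by
  have := UniformSpace.secondCountable_of_separable X
  have hℓ : Measurable (Function.uncurry fun (ω : (X × Y) × (X × Y)) t =>
      L ω.1.1 ω.1.2 ω.2.1 ω.2.2 t) :=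
    hL_meas.comp (f := fun p : ((X × Y) × (X × Y)) × ℝ => (p.1.1, p.1.2, p.2)) (by fun_prop)
  obtain ⟨v, hv, hveq, hvb⟩ := exists_tendsto_inv_smul_sub_of_contamination hℓ
    (fun _ => hL_convex _ _ _ _) (fun _ => hL_lip _ _ _ _) (fun _ => hD1 _ _ _ _)
    (fun _ => hD2 _ _ _ _) (fun _ => hD2bdd _ _ _ _)
    (hΦcont.stronglyMeasurable.comp_measurable (by fun_prop)) (fun _ => hkb _) P (x₀, y₀) hlam
    (Eventually.of_forall hfP) (fun ε hε => Eventually.of_forall (hfε ε hε.1.le hε.2))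
  refine ⟨v, hv, hveq, ?_⟩
  rw [div_mul_eq_mul_div, div_mul_eq_mul_div, le_div_iff₀ hlam]
  nlinarith [norm_nonneg v]

/-- **Bounded influence function** (Corollary 3.5). Under the standing assumptions, for the
contamination `P_ε = (1-ε)P + ε δ_{(x₀,y₀)}` the influence function
`IF((x₀,y₀); S, P) = lim_{ε→0⁺} (f_{L*,P_ε,λ} - f_{L*,P,λ})/ε` exists in `H`, satisfies
`M(P)(IF) = -T(δ_{(x₀,y₀)}; P)` with
`T(δ_{(x₀,y₀)};P) = -2∫ D₅L∘f̂_P ⬝ Φ d(P⊗P)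
  + ∫ [D₅L(x,y,x₀,y₀)Φ(x,x₀) + D₅L(x₀,y₀,x',y')Φ(x₀,x')] d(P⊗P)`,
and is bounded: `‖IF‖ ≤ (8/λ)‖k‖_∞|L|₁`. -/
theorem bounded_influence_function
    {X : Type*} [MetricSpace X] [CompleteSpace X] [TopologicalSpace.SeparableSpace X]
    [MeasurableSpace X] [BorelSpace X]
    {H : Type*} [NormedAddCommGroup H] [InnerProductSpace ℝ H] [CompleteSpace H]
    [TopologicalSpace.SeparableSpace H]
    (Y : Set ℝ) (hYclosed : IsClosed Y)
    (L D₅L D₅D₅L : X → Y → X → Y → ℝ → ℝ)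
    (hL_meas : Measurable fun p : (X × Y) × (X × Y) × ℝ => L p.1.1 p.1.2 p.2.1.1 p.2.1.2 p.2.2)
    (hL_nonneg : ∀ x y x' y' t, 0 ≤ L x y x' y' t)
    (hL_convex : ∀ x y x' y', ConvexOn ℝ Set.univ (L x y x' y'))
    (c : ℝ) (hc : 0 ≤ c)
    (hL_lip : ∀ x y x' y' s t, |L x y x' y' t - L x y x' y' s| ≤ c * |t - s|)
    (hD1 : ∀ x y x' y' t, HasDerivAt (L x y x' y') (D₅L x y x' y' t) t)
    (hD2 : ∀ x y x' y' t, HasDerivAt (D₅L x y x' y') (D₅D₅L x y x' y' t) t)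
    (hD1cont : ∀ x y x' y', Continuous (D₅L x y x' y'))
    (hD2cont : ∀ x y x' y', Continuous (D₅D₅L x y x' y'))
    (cL1 : ℝ) (hcL1 : 0 < cL1) (hD1bdd : ∀ x y x' y' t, |D₅L x y x' y' t| ≤ cL1)
    (cL2 : ℝ) (hcL2 : 0 < cL2) (hD2bdd : ∀ x y x' y' t, |D₅D₅L x y x' y' t| ≤ cL2)
    (Φ : X × X → H) (hΦcont : Continuous Φ)
    (kb : ℝ) (hkb : ∀ p : X × X, ‖Φ p‖ ≤ kb)
    (P : Measure (X × Y)) [IsProbabilityMeasure P]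
    (lam : ℝ) (hlam : 0 < lam)
    (x₀ : X) (y₀ : Y)
    (fP : H) (hfP : ∀ g : H, regRisk L Φ P lam fP ≤ regRisk L Φ P lam g)
    (fε : ℝ → H)
    (hfε : ∀ ε : ℝ, 0 ≤ ε → ε < 1 → ∀ g : H,
      regRisk L Φ
          (ENNReal.ofReal (1 - ε) • P + ENNReal.ofReal ε • Measure.dirac ((x₀, y₀) : X × Y))
          lam (fε ε)
        ≤ regRisk L Φ
            (ENNReal.ofReal (1 - ε) • P + ENNReal.ofReal ε • Measure.dirac ((x₀, y₀) : X × Y))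
            lam g) :
    ∃ v : H,
      Tendsto (fun ε : ℝ => ε⁻¹ • (fε ε - fP)) (nhdsWithin 0 (Set.Ioi 0)) (𝓝 v) ∧
      (2 * lam) • v +
          (∫ z : (X × Y) × (X × Y),
            (D₅D₅L z.1.1 z.1.2 z.2.1 z.2.2 (fhat Φ fP (z.1.1, z.2.1))
              * (@inner ℝ H _ (Φ (z.1.1, z.2.1)) v)) • Φ (z.1.1, z.2.1) ∂(P.prod P))
        = -(((-2 : ℝ)) • (∫ z : (X × Y) × (X × Y),
              (D₅L z.1.1 z.1.2 z.2.1 z.2.2 (fhat Φ fP (z.1.1, z.2.1))) • Φ (z.1.1, z.2.1)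
              ∂(P.prod P))
            + (∫ z : (X × Y) × (X × Y),
              ((D₅L z.1.1 z.1.2 x₀ y₀ (fhat Φ fP (z.1.1, x₀))) • Φ (z.1.1, x₀)
                + (D₅L x₀ y₀ z.2.1 z.2.2 (fhat Φ fP (x₀, z.2.1))) • Φ (x₀, z.2.1))
              ∂(P.prod P))) ∧
      ‖v‖ ≤ (8 / lam) * kb * c :=
  bounded_influence_function_general Y L D₅L D₅D₅L hL_meas hL_convex c hL_lip hD1 hD2 cL2 hD2bdd Φ
    hΦcont kb hkb P lam hlam x₀ y₀ fP hfP fε hfε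
end
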